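/- arXiv:2207.07377 — 11 statements merged into one kernel-verified Lean document; each statement's English description precedes it below -/
import Mathlib

section
/- Let a = (a₁,a₂) and b = (b₁,b₂) be points in ℝ² with a₁ ≠ b₁ and a₂ ≠ b₂. Let q = (x,y) be a point satisfying the L_* bisector condition |x−a₁|·|y−a₂| = |x−b₁|·|y−b₂|, and assume x ∉ {a₁, b₁, (a₁+b₁)/2} and y ∉ {a₂, b₂, (a₂+b₂)/2}. Then there exists ε > 0 and, for every real p with 0 < |p| < ε, a point q_p = (x_p, y_p) satisfying the L_p bisector condition |x_p−a₁|^p + |y_p−a₂|^p = |x_p−b₁|^p + |y_p−b₂|^p, such that q_p converges to q as p tends to 0. -/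
open Filter

private lemma log_lb (P Q : ℝ) (hP : 0 < P) (hQ : 0 < Q) :
    |P - Q| ≤ max P Q * |Real.log P - Real.log Q| := by
  rcases le_total Q P with h | h
  · have hlog : Real.log Q ≤ Real.log P := Real.log_le_log hQ h
    rw [abs_of_nonneg (by linarith), max_eq_left h, abs_of_nonneg (by linarith)]
    have h1 := Real.add_one_le_exp (Real.log Q - Real.log P)
    rw [Real.exp_sub, Real.exp_log hP, Real.exp_log hQ] at h1
    have h2 : (Real.log Q - Real.log P + 1) * P ≤ Q := by
      rw [← le_div_iff₀ hP]; exact h1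
    nlinarith
  · have hlog : Real.log P ≤ Real.log Q := Real.log_le_log hP h
    rw [abs_of_nonpos (by linarith), max_eq_right h, abs_of_nonpos (by linarith)]
    have h1 := Real.add_one_le_exp (Real.log P - Real.log Q)
    rw [Real.exp_sub, Real.exp_log hP, Real.exp_log hQ] at h1
    have h2 : (Real.log P - Real.log Q + 1) * Q ≤ P := by
      rw [← le_div_iff₀ hQ]; exact h1
    nlinarith

private lemma rpow_est (c p K : ℝ) (hc : 0 < c) (hK : |Real.log c| ≤ K)
    (hp : |p| * K ≤ 1) : |c ^ p - 1 - p * Real.log c| ≤ p ^ 2 * K ^ 2 := by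
  have h1 : |p * Real.log c| ≤ 1 := by
    rw [abs_mul]
    calc |p| * |Real.log c| ≤ |p| * K := mul_le_mul_of_nonneg_left hK (abs_nonneg p)
    _ ≤ 1 := hp
  have h2 := Real.abs_exp_sub_one_sub_id_le h1
  have h3 : c ^ p = Real.exp (p * Real.log c) := by
    rw [Real.rpow_def_of_pos hc, mul_comm]
  rw [h3]
  have h5 : (Real.log c) ^ 2 ≤ K ^ 2 := by
    rw [← sq_abs]; exact pow_le_pow_left₀ (abs_nonneg _) hK 2
  have h4 : (p * Real.log c) ^ 2 ≤ p ^ 2 * K ^ 2 := by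
    calc (p * Real.log c) ^ 2 = p ^ 2 * (Real.log c) ^ 2 := by ring
    _ ≤ p ^ 2 * K ^ 2 := mul_le_mul_of_nonneg_left h5 (sq_nonneg p)
  linarith

set_option maxHeartbeats 4000000 in
/-- If `q = (x,y)` satisfies the `L_*` bisector condition of two sites in
general position, and avoids the axis-parallel lines through the sites and the midlines,
then for all `p` with `0 < |p| < ε` there are `L_p` bisector points `q_p` converging
to `q` as `p → 0`. (Powers are `Real.rpow`.) -/
theorem stmt0 (a b : ℝ × ℝ) (hab1 : a.1 ≠ b.1) (hab2 : a.2 ≠ b.2)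
    (x y : ℝ)
    (hbis : |x - a.1| * |y - a.2| = |x - b.1| * |y - b.2|)
    (hx1 : x ≠ a.1) (hx2 : x ≠ b.1) (hx3 : x ≠ (a.1 + b.1) / 2)
    (hy1 : y ≠ a.2) (hy2 : y ≠ b.2) (hy3 : y ≠ (a.2 + b.2) / 2) :
    ∃ ε > (0:ℝ), ∃ q : ℝ → ℝ × ℝ,
      (∀ p : ℝ, 0 < |p| → |p| < ε →
        |(q p).1 - a.1| ^ p + |(q p).2 - a.2| ^ p
          = |(q p).1 - b.1| ^ p + |(q p).2 - b.2| ^ p) ∧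
      Tendsto q (nhdsWithin 0 {p : ℝ | 0 < |p| ∧ |p| < ε}) (nhds (x, y)) := by
  classical
  have hu : (0:ℝ) < |x - a.1| := abs_pos.mpr (sub_ne_zero.mpr hx1)
  have hv : (0:ℝ) < |x - b.1| := abs_pos.mpr (sub_ne_zero.mpr hx2)
  have hs0 : (0:ℝ) < |y - a.2| := abs_pos.mpr (sub_ne_zero.mpr hy1)
  have hw0 : (0:ℝ) < |y - b.2| := abs_pos.mpr (sub_ne_zero.mpr hy2)
  set u := |x - a.1| with hu_def
  set v := |x - b.1| with hv_def
  set s0 := |y - a.2| with hs0_def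
  set w0 := |y - b.2| with hw0_def
  have huv : u ≠ v := by
    intro h
    rw [hu_def, hv_def] at h
    rcases abs_eq_abs.mp h with h' | h'
    · exact hab1 (by linarith)
    · exact hx3 (by linarith)
  set δ0 := min s0 w0 / 2 with hδ0_def
  have hδ0 : 0 < δ0 := div_pos (lt_min hs0 hw0) two_pos
  have hδs : δ0 ≤ s0 / 2 := by
    have := min_le_left s0 w0; rw [hδ0_def]; linarith
  have hδw : δ0 ≤ w0 / 2 := by
    have := min_le_right s0 w0; rw [hδ0_def]; linarith
  set σ : ℝ := if a.2 < y then 1 else -1 with hσ_def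
  set τ : ℝ := if b.2 < y then 1 else -1 with hτ_def
  have hσ : σ = 1 ∨ σ = -1 := by rw [hσ_def]; split <;> simp
  have hτ : τ = 1 ∨ τ = -1 := by rw [hτ_def]; split <;> simp
  have hA : ∀ t : ℝ, |t - y| ≤ δ0 → |t - a.2| = σ * (t - a.2) := by
    intro t ht
    obtain ⟨h1, h2⟩ := abs_le.mp ht
    rw [hσ_def]
    split_ifs with h
    · have hs : s0 = y - a.2 := by rw [hs0_def, abs_of_pos (by linarith)]
      rw [one_mul, abs_of_pos (by linarith)]
    · have h' : y < a.2 := lt_of_le_of_ne (not_lt.mp h) hy1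
      have hs : s0 = a.2 - y := by rw [hs0_def, abs_of_neg (by linarith)]; ring
      rw [abs_of_neg (by linarith)]; ring
  have hB : ∀ t : ℝ, |t - y| ≤ δ0 → |t - b.2| = τ * (t - b.2) := by
    intro t ht
    obtain ⟨h1, h2⟩ := abs_le.mp ht
    rw [hτ_def]
    split_ifs with h
    · have hs : w0 = y - b.2 := by rw [hw0_def, abs_of_pos (by linarith)]
      rw [one_mul, abs_of_pos (by linarith)]
    · have h' : y < b.2 := lt_of_le_of_ne (not_lt.mp h) hy2
      have hs : w0 = b.2 - y := by rw [hw0_def, abs_of_neg (by linarith)]; ring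
      rw [abs_of_neg (by linarith)]; ring
  have hyy : |y - y| ≤ δ0 := by simpa using hδ0.le
  have hAy : s0 = σ * (y - a.2) := by rw [hs0_def]; exact hA y hyy
  have hBy : w0 = τ * (y - b.2) := by rw [hw0_def]; exact hB y hyy
  have hrangeA : ∀ t : ℝ, |t - y| ≤ δ0 → s0 / 2 ≤ |t - a.2| ∧ |t - a.2| ≤ 2 * s0 := by
    intro t ht
    have h1 : |t - a.2| = s0 + σ * (t - y) := by rw [hA t ht, hAy]; ring
    have h2 : |σ * (t - y)| ≤ δ0 := by
      rcases hσ with h | h <;> rw [h] <;> simpa [abs_sub_comm] using ht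
    obtain ⟨h3, h4⟩ := abs_le.mp h2
    constructor <;> [linarith; linarith]
  have hrangeB : ∀ t : ℝ, |t - y| ≤ δ0 → w0 / 2 ≤ |t - b.2| ∧ |t - b.2| ≤ 2 * w0 := by
    intro t ht
    have h1 : |t - b.2| = w0 + τ * (t - y) := by rw [hB t ht, hBy]; ring
    have h2 : |τ * (t - y)| ≤ δ0 := by
      rcases hτ with h | h <;> rw [h] <;> simpa [abs_sub_comm] using ht
    obtain ⟨h3, h4⟩ := abs_le.mp h2
    constructor <;> [linarith; linarith]
  set m := u * σ - v * τ with hm_def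
  have hm : m ≠ 0 := by
    intro hc
    rw [hm_def] at hc
    rcases hσ with h | h <;> rcases hτ with h' | h' <;> rw [h, h'] at hc
    · exact huv (by linarith)
    · nlinarith
    · nlinarith
    · exact huv (by linarith)
  have hm' : 0 < |m| := abs_pos.mpr hm
  have hg : ∀ t : ℝ, |t - y| ≤ δ0 → u * |t - a.2| - v * |t - b.2| = m * (t - y) := by
    intro t ht
    rw [hA t ht, hB t ht, hm_def]
    have h0 : u * (σ * (y - a.2)) - v * (τ * (y - b.2)) = 0 := by
      rw [← hAy, ← hBy]; linarith [hbis]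
    linear_combination h0
  set K := |Real.log u| + |Real.log v| + |Real.log (s0 / 2)| + |Real.log (2 * s0)|
      + |Real.log (w0 / 2)| + |Real.log (2 * w0)| + 1 with hK_def
  have hK1 : 1 ≤ K := by
    rw [hK_def]
    linarith [abs_nonneg (Real.log u), abs_nonneg (Real.log v),
      abs_nonneg (Real.log (s0 / 2)), abs_nonneg (Real.log (2 * s0)),
      abs_nonneg (Real.log (w0 / 2)), abs_nonneg (Real.log (2 * w0))]
  have hK0 : 0 < K := lt_of_lt_of_le one_pos hK1
  have hKu : |Real.log u| ≤ K := by
    rw [hK_def]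
    linarith [abs_nonneg (Real.log v), abs_nonneg (Real.log (s0 / 2)),
      abs_nonneg (Real.log (2 * s0)), abs_nonneg (Real.log (w0 / 2)),
      abs_nonneg (Real.log (2 * w0))]
  have hKv : |Real.log v| ≤ K := by
    rw [hK_def]
    linarith [abs_nonneg (Real.log u), abs_nonneg (Real.log (s0 / 2)),
      abs_nonneg (Real.log (2 * s0)), abs_nonneg (Real.log (w0 / 2)),
      abs_nonneg (Real.log (2 * w0))]
  have hKA : ∀ t : ℝ, |t - y| ≤ δ0 → |Real.log (|t - a.2|)| ≤ K := by
    intro t ht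
    obtain ⟨h1, h2⟩ := hrangeA t ht
    have hl1 : Real.log (s0 / 2) ≤ Real.log |t - a.2| := Real.log_le_log (by linarith) h1
    have hl2 : Real.log |t - a.2| ≤ Real.log (2 * s0) := Real.log_le_log (by linarith) h2
    rw [hK_def]
    refine abs_le.mpr ⟨?_, ?_⟩
    · linarith [neg_abs_le (Real.log (s0 / 2)), abs_nonneg (Real.log u),
        abs_nonneg (Real.log v), abs_nonneg (Real.log (2 * s0)),
        abs_nonneg (Real.log (w0 / 2)), abs_nonneg (Real.log (2 * w0))]
    · linarith [le_abs_self (Real.log (2 * s0)), abs_nonneg (Real.log u),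
        abs_nonneg (Real.log v), abs_nonneg (Real.log (s0 / 2)),
        abs_nonneg (Real.log (w0 / 2)), abs_nonneg (Real.log (2 * w0))]
  have hKB : ∀ t : ℝ, |t - y| ≤ δ0 → |Real.log (|t - b.2|)| ≤ K := by
    intro t ht
    obtain ⟨h1, h2⟩ := hrangeB t ht
    have hl1 : Real.log (w0 / 2) ≤ Real.log |t - b.2| := Real.log_le_log (by linarith) h1
    have hl2 : Real.log |t - b.2| ≤ Real.log (2 * w0) := Real.log_le_log (by linarith) h2
    rw [hK_def]
    refine abs_le.mpr ⟨?_, ?_⟩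
    · linarith [neg_abs_le (Real.log (w0 / 2)), abs_nonneg (Real.log u),
        abs_nonneg (Real.log v), abs_nonneg (Real.log (2 * s0)),
        abs_nonneg (Real.log (s0 / 2)), abs_nonneg (Real.log (2 * w0))]
    · linarith [le_abs_self (Real.log (2 * w0)), abs_nonneg (Real.log u),
        abs_nonneg (Real.log v), abs_nonneg (Real.log (s0 / 2)),
        abs_nonneg (Real.log (2 * s0)), abs_nonneg (Real.log (w0 / 2))]
  set L : ℝ → ℝ := fun t => Real.log u + Real.log |t - a.2| - Real.log v
      - Real.log |t - b.2| with hL_def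
  set φ : ℝ → ℝ → ℝ := fun p t => u ^ p + |t - a.2| ^ p - v ^ p - |t - b.2| ^ p with hφ_def
  have hApos : ∀ t : ℝ, |t - y| ≤ δ0 → 0 < |t - a.2| := fun t ht =>
    lt_of_lt_of_le (by linarith) (hrangeA t ht).1
  have hBpos : ∀ t : ℝ, |t - y| ≤ δ0 → 0 < |t - b.2| := fun t ht =>
    lt_of_lt_of_le (by linarith) (hrangeB t ht).1
  have hφL : ∀ p : ℝ, |p| * K ≤ 1 → ∀ t : ℝ, |t - y| ≤ δ0 →
      |φ p t - p * L t| ≤ 4 * (p ^ 2 * K ^ 2) := by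
    intro p hp t ht
    have e1 := rpow_est u p K hu hKu hp
    have e2 := rpow_est _ p K (hApos t ht) (hKA t ht) hp
    have e3 := rpow_est v p K hv hKv hp
    have e4 := rpow_est _ p K (hBpos t ht) (hKB t ht) hp
    have key : φ p t - p * L t =
        (u ^ p - 1 - p * Real.log u) + (|t - a.2| ^ p - 1 - p * Real.log |t - a.2|)
        - (v ^ p - 1 - p * Real.log v) - (|t - b.2| ^ p - 1 - p * Real.log |t - b.2|) := by
      simp only [hφ_def, hL_def]; ring
    rw [key]
    obtain ⟨a1, a1'⟩ := abs_le.mp e1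
    obtain ⟨a2, a2'⟩ := abs_le.mp e2
    obtain ⟨a3, a3'⟩ := abs_le.mp e3
    obtain ⟨a4, a4'⟩ := abs_le.mp e4
    exact abs_le.mpr ⟨by linarith only [a1, a2, a3, a4, a1', a2', a3', a4'],
      by linarith only [a1, a2, a3, a4, a1', a2', a3', a4']⟩
  set M2 := max (u * (2 * s0)) (v * (2 * w0)) with hM2_def
  have hM2 : 0 < M2 := lt_of_lt_of_le (mul_pos hu (by linarith)) (le_max_left _ _)
  have hLg : ∀ t : ℝ, |t - y| ≤ δ0 → |m| * |t - y| ≤ M2 * |L t| := by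
    intro t ht
    have hAt := hApos t ht
    have hBt := hBpos t ht
    have hP : 0 < u * |t - a.2| := mul_pos hu hAt
    have hQ : 0 < v * |t - b.2| := mul_pos hv hBt
    have hlb := log_lb _ _ hP hQ
    have hLt : Real.log (u * |t - a.2|) - Real.log (v * |t - b.2|) = L t := by
      rw [Real.log_mul (ne_of_gt hu) (ne_of_gt hAt),
        Real.log_mul (ne_of_gt hv) (ne_of_gt hBt)]
      simp only [hL_def]; ring
    rw [hLt] at hlb
    have hmax : max (u * |t - a.2|) (v * |t - b.2|) ≤ M2 := by
      apply max_le
      · refine le_trans ?_ (le_max_left (u * (2 * s0)) (v * (2 * w0)))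
        exact mul_le_mul_of_nonneg_left (hrangeA t ht).2 hu.le
      · refine le_trans ?_ (le_max_right (u * (2 * s0)) (v * (2 * w0)))
        exact mul_le_mul_of_nonneg_left (hrangeB t ht).2 hv.le
    calc |m| * |t - y| = |m * (t - y)| := (abs_mul m _).symm
      _ = |u * (|t - a.2|) - v * (|t - b.2|)| := by rw [hg t ht]
      _ ≤ max (u * |t - a.2|) (v * |t - b.2|) * |L t| := hlb
      _ ≤ M2 * |L t| := mul_le_mul_of_nonneg_right hmax (abs_nonneg _)
  have hsignP : ∀ t : ℝ, |t - y| ≤ δ0 → 0 < m * (t - y) → 0 < L t := by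
    intro t ht h
    have hAt := hApos t ht
    have hBt := hBpos t ht
    have hgt := hg t ht
    have hlt : v * |t - b.2| < u * |t - a.2| := by linarith
    have hlog := Real.log_lt_log (mul_pos hv hBt) hlt
    rw [Real.log_mul (ne_of_gt hv) (ne_of_gt hBt),
      Real.log_mul (ne_of_gt hu) (ne_of_gt hAt)] at hlog
    simp only [hL_def]; linarith only [hlog]
  have hsignN : ∀ t : ℝ, |t - y| ≤ δ0 → m * (t - y) < 0 → L t < 0 := by
    intro t ht h
    have hAt := hApos t ht
    have hBt := hBpos t ht
    have hgt := hg t ht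
    have hlt : u * |t - a.2| < v * |t - b.2| := by linarith
    have hlog := Real.log_lt_log (mul_pos hu hAt) hlt
    rw [Real.log_mul (ne_of_gt hv) (ne_of_gt hBt),
      Real.log_mul (ne_of_gt hu) (ne_of_gt hAt)] at hlog
    simp only [hL_def]; linarith only [hlog]
  set ℓ := |m| * δ0 / M2 with hℓ_def
  have hℓ : 0 < ℓ := by rw [hℓ_def]; exact div_pos (mul_pos hm' hδ0) hM2
  set ε := min (1 / K) (ℓ / (8 * K ^ 2)) with hε_def
  have hε : 0 < ε := lt_min (by positivity) (div_pos hℓ (by positivity))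
  set C := 4 * K ^ 2 * M2 / |m| with hC_def
  have hmemP : |(y + δ0) - y| ≤ δ0 := by
    rw [add_sub_cancel_left, abs_of_nonneg hδ0.le]
  have hmemN : |(y - δ0) - y| ≤ δ0 := by
    rw [sub_sub_cancel_left, abs_neg, abs_of_nonneg hδ0.le]
  have hLlbP : ℓ ≤ |L (y + δ0)| := by
    rw [hℓ_def, div_le_iff₀ hM2]
    have h2 : |(y + δ0) - y| = δ0 := by
      rw [add_sub_cancel_left, abs_of_nonneg hδ0.le]
    have h3 := hLg (y + δ0) hmemP
    rw [h2] at h3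
    exact h3.trans_eq (mul_comm _ _)
  have hLlbN : ℓ ≤ |L (y - δ0)| := by
    rw [hℓ_def, div_le_iff₀ hM2]
    have h2 : |(y - δ0) - y| = δ0 := by
      rw [sub_sub_cancel_left, abs_neg, abs_of_nonneg hδ0.le]
    have h3 := hLg (y - δ0) hmemN
    rw [h2] at h3
    exact h3.trans_eq (mul_comm _ _)
  have hcont : ∀ p : ℝ, ContinuousOn (fun t => φ p t) (Set.uIcc (y - δ0) (y + δ0)) := by
    intro p
    have hIcc : Set.uIcc (y - δ0) (y + δ0) = Set.Icc (y - δ0) (y + δ0) :=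
      Set.uIcc_of_le (by linarith)
    have hmem : ∀ t ∈ Set.uIcc (y - δ0) (y + δ0), |t - y| ≤ δ0 := by
      intro t ht
      rw [hIcc] at ht
      exact abs_le.mpr ⟨by linarith [ht.1], by linarith [ht.2]⟩
    have hA' : ContinuousOn (fun t : ℝ => |t - a.2| ^ p) (Set.uIcc (y - δ0) (y + δ0)) := by
      apply ContinuousOn.rpow_const
      · exact ((continuous_id.sub continuous_const).abs).continuousOn
      · exact fun t ht => Or.inl (ne_of_gt (hApos t (hmem t ht)))
    have hB' : ContinuousOn (fun t : ℝ => |t - b.2| ^ p) (Set.uIcc (y - δ0) (y + δ0)) := by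
      apply ContinuousOn.rpow_const
      · exact ((continuous_id.sub continuous_const).abs).continuousOn
      · exact fun t ht => Or.inl (ne_of_gt (hBpos t (hmem t ht)))
    simp only [hφ_def]
    exact ((continuousOn_const.add hA').sub continuousOn_const).sub hB'
  -- main existence lemma
  have hmain : ∀ p : ℝ, 0 < |p| → |p| < ε →
      ∃ t : ℝ, |t - y| ≤ δ0 ∧ φ p t = 0 ∧ |t - y| ≤ C * |p| := by
    intro p hp0 hpε
    have hp1 : |p| * K ≤ 1 := by
      have h : |p| ≤ 1 / K := le_trans hpε.le (by rw [hε_def]; exact min_le_left _ _)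
      exact (le_div_iff₀ hK0).mp h
    have hp2 : 4 * (p ^ 2 * K ^ 2) < |p| * ℓ := by
      have h : |p| < ℓ / (8 * K ^ 2) :=
        lt_of_lt_of_le hpε (by rw [hε_def]; exact min_le_right _ _)
      rw [lt_div_iff₀ (by positivity)] at h
      have e1 : |p| * (|p| * (8 * K ^ 2)) < |p| * ℓ := mul_lt_mul_of_pos_left h hp0
      have e3 : (0:ℝ) ≤ |p| * |p| * K ^ 2 := by positivity
      calc 4 * (p ^ 2 * K ^ 2) = 4 * (|p| * |p| * K ^ 2) := by
            rw [pow_two, ← abs_mul_abs_self]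
        _ ≤ |p| * (|p| * (8 * K ^ 2)) := by
            have heq : |p| * (|p| * (8 * K ^ 2)) = 8 * (|p| * |p| * K ^ 2) := by ring
            rw [heq]; linarith only [e3]
        _ < |p| * ℓ := e1
    have key : ∀ t : ℝ, |t - y| ≤ δ0 → ℓ ≤ |L t| → 0 < φ p t * (p * L t) := by
      intro t ht hLt
      have hb := hφL p hp1 t ht
      have h5 : |p| * ℓ ≤ |p * L t| := by
        rw [abs_mul]
        exact mul_le_mul_of_nonneg_left hLt (abs_nonneg p)
      have h6 : |φ p t - p * L t| < |p * L t| :=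
        lt_of_le_of_lt hb (lt_of_lt_of_le hp2 h5)
      rcases lt_trichotomy (p * L t) 0 with h | h | h
      · have habs : |p * L t| = -(p * L t) := abs_of_neg h
        obtain ⟨h7, h8⟩ := abs_lt.mp h6
        have : φ p t < 0 := by linarith only [h8, habs]
        exact mul_pos_of_neg_of_neg this h
      · rw [h, abs_zero] at h5
        exact absurd h5 (not_le.mpr (mul_pos hp0 hℓ))
      · have habs : |p * L t| = p * L t := abs_of_pos h
        obtain ⟨h7, h8⟩ := abs_lt.mp h6
        have : 0 < φ p t := by linarith only [h7, habs]
        exact mul_pos this h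
    have heqP : (y + δ0) - y = δ0 := by ring
    have heqN : (y - δ0) - y = -δ0 := by ring
    have hLsign : L (y - δ0) * L (y + δ0) < 0 := by
      rcases lt_or_gt_of_ne hm with hmneg | hmpos
      · have h1 : L (y + δ0) < 0 := hsignN _ hmemP (by rw [heqP]; exact mul_neg_of_neg_of_pos hmneg hδ0)
        have h2 : 0 < L (y - δ0) := hsignP _ hmemN (by rw [heqN]; exact mul_pos_of_neg_of_neg hmneg (neg_lt_zero.mpr hδ0))
        exact mul_neg_of_pos_of_neg h2 h1
      · have h1 : 0 < L (y + δ0) := hsignP _ hmemP (by rw [heqP]; exact mul_pos hmpos hδ0)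
        have h2 : L (y - δ0) < 0 := hsignN _ hmemN (by rw [heqN]; exact mul_neg_of_pos_of_neg hmpos (neg_lt_zero.mpr hδ0))
        exact mul_neg_of_neg_of_pos h2 h1
    have hp2pos : 0 < p ^ 2 := by rw [pow_two, ← abs_mul_abs_self]; exact mul_pos hp0 hp0
    have hLL : (p * L (y - δ0)) * (p * L (y + δ0)) < 0 := by
      have heq : (p * L (y - δ0)) * (p * L (y + δ0)) = p ^ 2 * (L (y - δ0) * L (y + δ0)) := by
        ring
      rw [heq]
      exact mul_neg_of_pos_of_neg hp2pos hLsign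
    have hkN := key (y - δ0) hmemN hLlbN
    have hkP := key (y + δ0) hmemP hLlbP
    have hφφ : φ p (y - δ0) * φ p (y + δ0) < 0 := by
      by_contra hcon
      push_neg at hcon
      have h1 : (φ p (y - δ0) * φ p (y + δ0)) * ((p * L (y - δ0)) * (p * L (y + δ0))) ≤ 0 :=
        mul_nonpos_iff.mpr (Or.inl ⟨hcon, hLL.le⟩)
      have h2 : 0 < (φ p (y - δ0) * (p * L (y - δ0))) * (φ p (y + δ0) * (p * L (y + δ0))) :=
        mul_pos hkN hkP
      have h3 : (φ p (y - δ0) * φ p (y + δ0)) * ((p * L (y - δ0)) * (p * L (y + δ0)))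
          = (φ p (y - δ0) * (p * L (y - δ0))) * (φ p (y + δ0) * (p * L (y + δ0))) := by ring
      rw [h3] at h1
      exact absurd h1 (not_le.mpr h2)
    have h0mem : (0:ℝ) ∈ Set.uIcc (φ p (y - δ0)) (φ p (y + δ0)) := by
      rcases mul_neg_iff.mp hφφ with ⟨h1, h2⟩ | ⟨h1, h2⟩
      · exact Set.mem_uIcc.mpr (Or.inr ⟨h2.le, h1.le⟩)
      · exact Set.mem_uIcc.mpr (Or.inl ⟨h1.le, h2.le⟩)
    obtain ⟨t, htmem, htval⟩ := intermediate_value_uIcc (hcont p) h0mem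
    have ht' : |t - y| ≤ δ0 := by
      rw [Set.uIcc_of_le (by linarith : y - δ0 ≤ y + δ0)] at htmem
      exact abs_le.mpr ⟨by linarith [htmem.1], by linarith [htmem.2]⟩
    have htval' : φ p t = 0 := htval
    have hb := hφL p hp1 t ht'
    rw [htval', zero_sub, abs_neg] at hb
    have h9 : |L t| ≤ 4 * |p| * K ^ 2 := by
      rw [abs_mul] at hb
      have heq : 4 * (p ^ 2 * K ^ 2) = |p| * (4 * |p| * K ^ 2) := by
        rw [← sq_abs]; ring
      rw [heq] at hb
      exact le_of_mul_le_mul_left hb hp0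
    have h10 := hLg t ht'
    have h11 : |m| * |t - y| ≤ M2 * (4 * |p| * K ^ 2) :=
      le_trans h10 (mul_le_mul_of_nonneg_left h9 hM2.le)
    have h12 : |t - y| ≤ C * |p| := by
      rw [hC_def, div_mul_eq_mul_div, le_div_iff₀ hm']
      calc |t - y| * |m| = |m| * |t - y| := mul_comm _ _
        _ ≤ M2 * (4 * |p| * K ^ 2) := h11
        _ = 4 * K ^ 2 * M2 * |p| := by ring
    exact ⟨t, ht', htval', h12⟩
  set fy : ℝ → ℝ := fun p =>
    if h : ∃ t : ℝ, |t - y| ≤ δ0 ∧ φ p t = 0 ∧ |t - y| ≤ C * |p| then h.choose else y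
    with hfy_def
  have hfy : ∀ p : ℝ, 0 < |p| → |p| < ε → φ p (fy p) = 0 ∧ |fy p - y| ≤ C * |p| := by
    intro p hp0 hpε
    have hex := hmain p hp0 hpε
    have heq : fy p = hex.choose := by
      simp only [hfy_def]
      rw [dif_pos hex]
    rw [heq]
    exact ⟨hex.choose_spec.2.1, hex.choose_spec.2.2⟩
  refine ⟨ε, hε, fun p => (x, fy p), ?_, ?_⟩
  · intro p hp0 hpε
    have h := (hfy p hp0 hpε).1
    simp only [hφ_def] at h
    rw [hu_def, hv_def] at h
    dsimp only
    linarith only [h]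
  · apply Filter.Tendsto.prodMk_nhds tendsto_const_nhds
    rw [← tendsto_sub_nhds_zero_iff]
    have hCp : Tendsto (fun p : ℝ => C * |p|)
        (nhdsWithin 0 {p : ℝ | 0 < |p| ∧ |p| < ε}) (nhds 0) := by
      have h1 : Tendsto (fun p : ℝ => C * |p|) (nhds 0) (nhds (C * |(0:ℝ)|)) :=
        (continuous_const.mul continuous_abs).tendsto 0
      simpa using h1.mono_left nhdsWithin_le_nhds
    have hCn : Tendsto (fun p : ℝ => -(C * |p|))
        (nhdsWithin 0 {p : ℝ | 0 < |p| ∧ |p| < ε}) (nhds 0) := by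
      simpa using hCp.neg
    apply tendsto_of_tendsto_of_tendsto_of_le_of_le' hCn hCp
    · filter_upwards [self_mem_nhdsWithin] with p hp
      have := (hfy p hp.1 hp.2).2
      linarith only [(abs_le.mp this).1]
    · filter_upwards [self_mem_nhdsWithin] with p hp
      exact (abs_le.mp (hfy p hp.1 hp.2).2).2
end

section
/- Let a = (a₁,a₂) and b = (b₁,b₂) be points in ℝ² with a₁ ≠ b₁ and a₂ ≠ b₂, and let (x,y) be a point with ((x−a₁)(x−b₁))·((y−a₂)(y−b₂)) > 0 (an odd-numbered region of the grid formed by the axis-parallel lines through a and b). Then |x−a₁|·|y−a₂| = |x−b₁|·|y−b₂| holds if and only if (a₂−b₂)·x + (a₁−b₁)·y = a₁·a₂ − b₁·b₂. -/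
/-- in odd-numbered regions of the grid, the `L_*` bisector condition is
equivalent to a linear equation. -/
theorem stmt1 (a1 a2 b1 b2 x y : ℝ) (h1 : a1 ≠ b1) (h2 : a2 ≠ b2)
    (hreg : ((x - a1) * (x - b1)) * ((y - a2) * (y - b2)) > 0) :
    |x - a1| * |y - a2| = |x - b1| * |y - b2| ↔
      (a2 - b2) * x + (a1 - b1) * y = a1 * a2 - b1 * b2 := by
  set P := (x - a1) * (y - a2) with hP
  set Q := (x - b1) * (y - b2) with hQ
  have hPQ : P * Q > 0 := by rw [hP, hQ]; nlinarith [hreg]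
  have habs : |x - a1| * |y - a2| = |P| := (abs_mul _ _).symm
  have habs' : |x - b1| * |y - b2| = |Q| := (abs_mul _ _).symm
  rw [habs, habs']
  have key : |P| = |Q| ↔ P = Q := by
    rcases mul_pos_iff.mp hPQ with ⟨hp, hq⟩ | ⟨hp, hq⟩
    · rw [abs_of_pos hp, abs_of_pos hq]
    · rw [abs_of_neg hp, abs_of_neg hq]; constructor <;> intro h <;> linarith
  rw [key]
  constructor <;> intro h
  · have : P - Q = 0 := by rw [h]; ring
    nlinarith [this]
  · have : P - Q = 0 := by rw [hP, hQ]; nlinarith [h]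
    linarith
end

section
/- Let a = (a₁,a₂) and b = (b₁,b₂) be points in ℝ² with a₁ ≠ b₁ and a₂ ≠ b₂, and let (x,y) be a point with ((x−a₁)(x−b₁))·((y−a₂)(y−b₂)) < 0 (an even-numbered region of the grid formed by the axis-parallel lines through a and b). Then |x−a₁|·|y−a₂| = |x−b₁|·|y−b₂| holds if and only if (x − (a₁+b₁)/2)·(y − (a₂+b₂)/2) = −(a₁−b₁)·(a₂−b₂)/4. -/
/-- in even-numbered regions of the grid, the `L_*` bisector condition is
equivalent to a hyperbola equation. -/
theorem stmt2 (a1 a2 b1 b2 x y : ℝ) (h1 : a1 ≠ b1) (h2 : a2 ≠ b2)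
    (hreg : ((x - a1) * (x - b1)) * ((y - a2) * (y - b2)) < 0) :
    |x - a1| * |y - a2| = |x - b1| * |y - b2| ↔
      (x - (a1 + b1) / 2) * (y - (a2 + b2) / 2) = -((a1 - b1) * (a2 - b2)) / 4 := by
  rw [← abs_mul, ← abs_mul, abs_eq_abs]
  constructor
  · rintro (h | h)
    · exfalso
      have hPQ : ((x - a1) * (y - a2)) * ((x - b1) * (y - b2)) < 0 := by linarith [hreg]
      rw [h] at hPQ
      exact absurd hPQ (not_lt.mpr (mul_self_nonneg _))
    · linear_combination h / 2
  · intro h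
    right
    linear_combination 2 * h
end

section
/- Fix u ≥ 1 and sites a = (−u,−1), b = (u,1). For every fixed x with x ∈ (0,u) ∪ (u,∞) there exists ε > 0 such that for every real p with 0 < |p| < ε, there exists y < −1 with |x+u|^p + |y+1|^p = |x−u|^p + |y−1|^p; that is, the vertical line at x meets the L_p bisector of a and b in a point with Y-coordinate below −1. -/
private lemma aux_rpow_subadd {a b p : ℝ} (ha : 0 ≤ a) (hb : 0 ≤ b) (hp : 0 ≤ p) (hp1 : p ≤ 1) :
    (a + b) ^ p ≤ a ^ p + b ^ p := by
  have h := NNReal.rpow_add_le_add_rpow a.toNNReal b.toNNReal hp hp1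
  have h2 := NNReal.coe_le_coe.2 h
  rw [← Real.toNNReal_add ha hb] at h2
  simpa [NNReal.coe_rpow, Real.coe_toNNReal _ ha, Real.coe_toNNReal _ hb,
    Real.coe_toNNReal _ (add_nonneg ha hb)] using h2

/-- for `x ∈ (0,u) ∪ (u,∞)` and all `p` close enough to `0` (from either
side), the vertical line at `x` carries an `L_p` bisector point with `Y`-coordinate
below `−1`. -/
theorem stmt4 (u x : ℝ) (hu : 1 ≤ u) (hx : x ∈ Set.Ioo 0 u ∪ Set.Ioi u) :
    ∃ ε > (0:ℝ), ∀ p : ℝ, 0 < |p| → |p| < ε →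
      ∃ y : ℝ, y < -1 ∧
        |x + u| ^ p + |y + 1| ^ p = |x - u| ^ p + |y - 1| ^ p := by
  have hu0 : (0:ℝ) < u := lt_of_lt_of_le one_pos hu
  have hx0 : 0 < x := by
    rcases hx with h | h
    · exact h.1
    · exact lt_trans hu0 h
  set A := x + u with hAdef
  set B := |x - u| with hBdef
  have hA : 0 < A := by positivity
  have hB : 0 < B := by
    rcases hx with h | h
    · rw [hBdef, abs_of_neg (by linarith [h.2] : x - u < 0)]; linarith [h.2]
    · rw [hBdef, abs_of_pos (by simp only [Set.mem_Ioi] at h; linarith : (0:ℝ) < x - u)]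
      simp only [Set.mem_Ioi] at h; linarith
  have hBA : B < A := by
    rcases hx with h | h
    · rw [hBdef, abs_of_neg (by linarith [h.2] : x - u < 0)]; simp only [hAdef]; linarith
    · simp only [Set.mem_Ioi] at h
      rw [hBdef, abs_of_pos (by linarith : (0:ℝ) < x - u)]; simp only [hAdef]; linarith
  -- choose ε by continuity of p ↦ 2^p + B^p - A^p, which equals 1 at p = 0
  have hcont : ContinuousAt (fun p : ℝ => (2:ℝ) ^ p + B ^ p - A ^ p) 0 := by
    exact ((Real.continuousAt_const_rpow (two_ne_zero)).add
      (Real.continuousAt_const_rpow hB.ne')).sub (Real.continuousAt_const_rpow hA.ne')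
  have h0 : ((2:ℝ) ^ (0:ℝ) + B ^ (0:ℝ) - A ^ (0:ℝ)) = 1 := by
    simp [Real.rpow_zero]
  have htend : Filter.Tendsto (fun p : ℝ => (2:ℝ) ^ p + B ^ p - A ^ p) (nhds 0) (nhds 1) := by
    rw [← h0]; exact hcont
  have hev : ∀ᶠ p in nhds (0:ℝ), 0 < (2:ℝ) ^ p + B ^ p - A ^ p :=
    htend.eventually (eventually_gt_nhds (by norm_num : (0:ℝ) < 1))
  obtain ⟨ε₀, hε₀, hball⟩ := Metric.eventually_nhds_iff.1 hev
  refine ⟨min ε₀ (1/2), by positivity, ?_⟩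
  intro p hp hpε
  have hp0 : p ≠ 0 := by
    intro h; rw [h] at hp; simp at hp
  have hpos2 : 0 < (2:ℝ) ^ p + B ^ p - A ^ p := by
    apply hball
    rw [Real.dist_eq, sub_zero]
    exact lt_of_lt_of_le hpε (min_le_left _ _)
  have hphalf : |p| < 1/2 := lt_of_lt_of_le hpε (min_le_right _ _)
  set t := B ^ p - A ^ p with htdef
  -- produce endpoints δ ≤ s with the bisector-defining function straddling t
  have key : ∃ δ s : ℝ, 0 < δ ∧ δ ≤ s ∧
      t ∈ Set.uIcc (s ^ p - (s + 2) ^ p) (δ ^ p - (2 + δ) ^ p) := by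
    rcases lt_or_gt_of_ne hp0 with hpneg | hppos
    · -- p < 0
      have ht : 0 < t := sub_pos.2 (Real.rpow_lt_rpow_of_neg hB hBA hpneg)
      have hc : (0:ℝ) < 2 ^ p + t := by positivity
      refine ⟨(2 ^ p + t) ^ p⁻¹, max ((2 ^ p + t) ^ p⁻¹) (t ^ p⁻¹),
        Real.rpow_pos_of_pos hc _, le_max_left _ _, ?_⟩
      set δ := (2 ^ p + t) ^ p⁻¹ with hδdef
      set s := max δ (t ^ p⁻¹) with hsdef
      have hδpos : 0 < δ := Real.rpow_pos_of_pos hc _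
      have hspos : 0 < s := lt_of_lt_of_le hδpos (le_max_left _ _)
      have hδp : δ ^ p = 2 ^ p + t := Real.rpow_inv_rpow hc.le hp0
      have hsp : s ^ p ≤ t := by
        have h1 : (t ^ p⁻¹) ^ p = t := Real.rpow_inv_rpow ht.le hp0
        have h2 : t ^ p⁻¹ ≤ s := le_max_right _ _
        calc s ^ p ≤ (t ^ p⁻¹) ^ p := by
              rw [Real.rpow_le_rpow_iff_of_neg hspos (Real.rpow_pos_of_pos ht _) hpneg]
              exact h2
          _ = t := h1
      refine Set.mem_uIcc.2 (Or.inl ⟨?_, ?_⟩)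
      · have : (0:ℝ) < (s + 2) ^ p := Real.rpow_pos_of_pos (by linarith) _
        linarith
      · have h2δ : (2 + δ) ^ p ≤ 2 ^ p := by
          rw [Real.rpow_le_rpow_iff_of_neg (by linarith) (by norm_num) hpneg]
          linarith
        linarith
    · -- p > 0
      have hD : 0 < A ^ p - B ^ p := sub_pos.2 (Real.rpow_lt_rpow hB.le hBA hppos)
      have hc : (0:ℝ) < 2 ^ p + t := by
        simp only [htdef]; linarith [hpos2]
      have hc' : (2:ℝ) ^ p + t = 2 ^ p - (A ^ p - B ^ p) := by simp only [htdef]; ring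
      refine ⟨(2 ^ p + t) ^ p⁻¹, max ((2 ^ p + t) ^ p⁻¹) ((4 / (A ^ p - B ^ p)) ^ p⁻¹),
        Real.rpow_pos_of_pos hc _, le_max_left _ _, ?_⟩
      set D := A ^ p - B ^ p with hDdef
      set δ := (2 ^ p + t) ^ p⁻¹ with hδdef
      set s := max δ ((4 / D) ^ p⁻¹) with hsdef
      have hδpos : 0 < δ := Real.rpow_pos_of_pos hc _
      have hspos : 0 < s := lt_of_lt_of_le hδpos (le_max_left _ _)
      have hδp : δ ^ p = 2 ^ p + t := Real.rpow_inv_rpow hc.le hp0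
      have h4D : 4 / D ≤ s ^ p := by
        have h1 : ((4 / D) ^ p⁻¹) ^ p = 4 / D := Real.rpow_inv_rpow (by positivity) hp0
        calc 4 / D = ((4 / D) ^ p⁻¹) ^ p := h1.symm
          _ ≤ s ^ p := Real.rpow_le_rpow (by positivity) (le_max_right _ _) hppos.le
      -- key estimate : (s+2)^p - s^p ≤ D
      have hkey : (s + 2) ^ p - s ^ p ≤ D := by
        set a := (s + 2) ^ p with hadef
        set b := s ^ p with hbdef
        have hbpos : 0 < b := Real.rpow_pos_of_pos hspos _
        have hba : b ≤ a := Real.rpow_le_rpow hspos.le (by linarith) hppos.le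
        have hsq : a ^ 2 ≤ b ^ 2 + 4 := by
          have e1 : a ^ 2 = (s + 2) ^ (p + p) := by
            rw [Real.rpow_add (by linarith), hadef]; ring
          have e2 : b ^ 2 = s ^ (p + p) := by
            rw [Real.rpow_add hspos, hbdef]; ring
          have e3 : (s + 2) ^ (p + p) ≤ s ^ (p + p) + 2 ^ (p + p) := by
            exact aux_rpow_subadd hspos.le (by norm_num) (by positivity)
              (by have := abs_lt.1 hphalf; linarith [this.2])
          have e4 : (2:ℝ) ^ (p + p) ≤ 4 := by
            calc (2:ℝ) ^ (p + p) ≤ 2 ^ (1:ℝ) := by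
                  apply Real.rpow_le_rpow_of_exponent_le one_le_two
                  have := abs_lt.1 hphalf; linarith [this.2]
              _ ≤ 4 := by rw [Real.rpow_one]; norm_num
          rw [e1, e2]; linarith
        have h4Db : 4 ≤ D * b := by
          rw [div_le_iff₀ hD] at h4D; linarith [h4D]
        nlinarith [mul_nonneg (sub_nonneg.2 hba) hbpos.le, mul_pos hD hbpos]
      refine Set.mem_uIcc.2 (Or.inr ⟨?_, ?_⟩)
      · have h2δ : (2:ℝ) ^ p ≤ (2 + δ) ^ p :=
          Real.rpow_le_rpow (by norm_num) (by linarith) hppos.le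
        linarith [hδp, h2δ]
      · linarith [hkey]
  obtain ⟨δ, s, hδpos, hδs, hmem⟩ := key
  -- apply the intermediate value theorem on [-1-s, -1-δ]
  set g : ℝ → ℝ := fun y => |y + 1| ^ p - |y - 1| ^ p with hgdef
  have hab : (-1 - s : ℝ) ≤ -1 - δ := by linarith
  have hcg : ContinuousOn g (Set.uIcc (-1 - s) (-1 - δ)) := by
    rw [Set.uIcc_of_le hab]
    apply ContinuousOn.sub
    · apply ContinuousOn.rpow_const
      · exact (continuous_abs.comp (continuous_id.add continuous_const)).continuousOn
      · intro y hy
        left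
        have hy2 : y ≤ -1 - δ := hy.2
        rw [abs_ne_zero]
        intro h; rw [show y = -1 by linarith] at hy2; linarith
    · apply ContinuousOn.rpow_const
      · exact (continuous_abs.comp (continuous_id.sub continuous_const)).continuousOn
      · intro y hy
        left
        have hy2 : y ≤ -1 - δ := hy.2
        rw [abs_ne_zero]
        intro h; rw [show y = 1 by linarith] at hy2; linarith
  have hga : g (-1 - s) = s ^ p - (s + 2) ^ p := by
    have hspos : 0 < s := lt_of_lt_of_le hδpos hδs
    simp only [hgdef]
    rw [show (-1 - s) + 1 = -s by ring, show (-1 - s) - 1 = -(s + 2) by ring,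
      abs_neg, abs_neg, abs_of_pos hspos, abs_of_pos (by linarith : (0:ℝ) < s + 2)]
  have hgb : g (-1 - δ) = δ ^ p - (2 + δ) ^ p := by
    simp only [hgdef]
    rw [show (-1 - δ) + 1 = -δ by ring, show (-1 - δ) - 1 = -(2 + δ) by ring,
      abs_neg, abs_neg, abs_of_pos hδpos, abs_of_pos (by linarith : (0:ℝ) < 2 + δ)]
  have hmem' : t ∈ Set.uIcc (g (-1 - s)) (g (-1 - δ)) := by
    rw [hga, hgb]; exact hmem
  obtain ⟨y, hy, hgy⟩ := intermediate_value_uIcc hcg hmem'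
  refine ⟨y, ?_, ?_⟩
  · rw [Set.uIcc_of_le hab] at hy
    linarith [hy.2]
  · have hxu : |A| = A := abs_of_pos hA
    simp only [hgdef] at hgy
    rw [hxu]
    simp only [htdef] at hgy
    linarith [hgy]
end

section
/- Fix u ≥ 1 and sites a = (−u,−1), b = (u,1). For every fixed x with x ∈ (0,u) ∪ (u,∞) there exists ε > 0 such that for every real p with 0 < |p| < ε, there exists y ∈ (−1,0) with |x+u|^p + |y+1|^p = |x−u|^p + |y−1|^p; that is, the vertical line at x meets the L_p bisector of a and b in a point with Y-coordinate strictly between −1 and 0. -/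
private lemma key_ivt (A B p : ℝ) (hB : 0 < B) (hBA : B < A) (hp : p ≠ 0)
    (hsmall : |A ^ p - B ^ p| < 1) :
    ∃ y ∈ Set.Ioo (-1 : ℝ) 0, (y + 1) ^ p - (1 - y) ^ p = B ^ p - A ^ p := by
  have hA : 0 < A := hB.trans hBA
  set c : ℝ := B ^ p - A ^ p with hc
  set g : ℝ → ℝ := fun y => (y + 1) ^ p - (1 - y) ^ p with hg
  have hg0 : g 0 = 0 := by simp [hg, Real.one_rpow]
  have hcont : ∀ t0 : ℝ, 0 < t0 → t0 < 1 → ContinuousOn g (Set.Icc (t0 - 1) 0) := by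
    intro t0 ht0 ht1 y hy
    have h1 : (0:ℝ) < y + 1 := by have := hy.1; linarith
    have h2 : (0:ℝ) < 1 - y := by have := hy.2; linarith
    apply ContinuousWithinAt.sub
    · exact (ContinuousAt.rpow_const (continuousAt_id.add continuousAt_const)
        (Or.inl h1.ne')).continuousWithinAt
    · exact (ContinuousAt.rpow_const (continuousAt_const.sub continuousAt_id)
        (Or.inl h2.ne')).continuousWithinAt
  rcases hp.lt_or_gt with hneg | hpos
  · -- p < 0 : c > 0
    have hcpos : 0 < c := by
      have := Real.rpow_lt_rpow_of_neg hB hBA hneg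
      simp only [hc]; linarith
    set t0 : ℝ := (c + 2) ^ p⁻¹ with ht0def
    have hbase : (1:ℝ) < c + 2 := by linarith
    have ht0pos : 0 < t0 := Real.rpow_pos_of_pos (by linarith) _
    have ht0lt1 : t0 < 1 :=
      Real.rpow_lt_one_of_one_lt_of_neg hbase (inv_neg''.mpr hneg)
    have ht0p : t0 ^ p = c + 2 := Real.rpow_inv_rpow (by linarith) hp
    have h2t : (2 - t0) ^ p < 1 :=
      Real.rpow_lt_one_of_one_lt_of_neg (by linarith) hneg
    have hgy0 : c < g (t0 - 1) := by
      have : g (t0 - 1) = t0 ^ p - (2 - t0) ^ p := by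
        simp only [hg]; ring_nf
      rw [this, ht0p]; linarith
    have hsub := intermediate_value_Icc' (by linarith : t0 - 1 ≤ (0:ℝ))
      (hcont t0 ht0pos ht0lt1)
    have hcmem : c ∈ Set.Icc (g 0) (g (t0 - 1)) := by
      rw [hg0]; exact ⟨hcpos.le, hgy0.le⟩
    obtain ⟨y, hy, hgy⟩ := hsub hcmem
    refine ⟨y, ⟨by have := hy.1; linarith, ?_⟩, hgy⟩
    rcases lt_or_eq_of_le hy.2 with h | h
    · exact h
    · exfalso; rw [h, hg0] at hgy; linarith
  · -- 0 < p : c < 0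
    have hcneg : c < 0 := by
      have := Real.rpow_lt_rpow hB.le hBA hpos
      simp only [hc]; linarith
    have hcgt : -1 < c := by
      have := (abs_lt.mp hsmall).2
      simp only [hc]; linarith
    set t0 : ℝ := ((c + 1) / 2) ^ p⁻¹ with ht0def
    have hbpos : (0:ℝ) < (c + 1) / 2 := by linarith
    have hblt : (c + 1) / 2 < 1 := by linarith
    have ht0pos : 0 < t0 := Real.rpow_pos_of_pos hbpos _
    have ht0lt1 : t0 < 1 := Real.rpow_lt_one hbpos.le hblt (inv_pos.mpr hpos)
    have ht0p : t0 ^ p = (c + 1) / 2 := Real.rpow_inv_rpow hbpos.le hp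
    have h2t : (1:ℝ) < (2 - t0) ^ p :=
      (Real.one_lt_rpow_iff (by linarith)).mpr (Or.inl ⟨by linarith, hpos⟩)
    have hgy0 : g (t0 - 1) < c := by
      have : g (t0 - 1) = t0 ^ p - (2 - t0) ^ p := by
        simp only [hg]; ring_nf
      rw [this, ht0p]; linarith
    have hsub := intermediate_value_Icc (by linarith : t0 - 1 ≤ (0:ℝ))
      (hcont t0 ht0pos ht0lt1)
    have hcmem : c ∈ Set.Icc (g (t0 - 1)) (g 0) := by
      rw [hg0]; exact ⟨hgy0.le, hcneg.le⟩
    obtain ⟨y, hy, hgy⟩ := hsub hcmem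
    refine ⟨y, ⟨by have := hy.1; linarith, ?_⟩, hgy⟩
    rcases lt_or_eq_of_le hy.2 with h | h
    · exact h
    · exfalso; rw [h, hg0] at hgy; linarith

/-- for `x ∈ (0,u) ∪ (u,∞)` and all `p` close enough to `0` (from either
side), the vertical line at `x` carries an `L_p` bisector point with `Y`-coordinate
strictly between `−1` and `0`. -/
theorem stmt5 (u x : ℝ) (hu : 1 ≤ u) (hx : x ∈ Set.Ioo 0 u ∪ Set.Ioi u) :
    ∃ ε > (0:ℝ), ∀ p : ℝ, 0 < |p| → |p| < ε →
      ∃ y : ℝ, y ∈ Set.Ioo (-1 : ℝ) 0 ∧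
        |x + u| ^ p + |y + 1| ^ p = |x - u| ^ p + |y - 1| ^ p := by
  have hxpos : 0 < x := by
    rcases hx with h | h
    · exact h.1
    · linarith [Set.mem_Ioi.mp h]
  have hxne : x ≠ u := by
    rcases hx with h | h
    · exact ne_of_lt h.2
    · exact ne_of_gt (Set.mem_Ioi.mp h)
  set A : ℝ := x + u with hAdef
  set B : ℝ := |x - u| with hBdef
  have hB : 0 < B := abs_pos.mpr (sub_ne_zero.mpr hxne)
  have hBA : B < A := by
    rw [hBdef, abs_lt]; constructor <;> [linarith; linarith]
  have hA : 0 < A := hB.trans hBA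
  -- continuity in p to get ε
  set F : ℝ → ℝ := fun p => Real.exp (Real.log A * p) - Real.exp (Real.log B * p) with hF
  have hFc : ContinuousAt F 0 := by
    apply ContinuousAt.sub <;>
      exact (Real.continuous_exp.comp (continuous_const.mul continuous_id)).continuousAt
  have hF0 : F 0 = 0 := by simp [hF]
  obtain ⟨ε, hε, hball⟩ := Metric.continuousAt_iff.mp hFc 1 one_pos
  refine ⟨ε, hε, fun p hp hpε => ?_⟩
  have hpne : p ≠ 0 := by
    intro h; rw [h] at hp; simp at hp
  have hsmall : |A ^ p - B ^ p| < 1 := by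
    have := hball (show dist p 0 < ε by simpa [Real.dist_eq] using hpε)
    rw [hF0, Real.dist_eq, sub_zero] at this
    rwa [Real.rpow_def_of_pos hA, Real.rpow_def_of_pos hB]
  obtain ⟨y, hy, heq⟩ := key_ivt A B p hB hBA hpne hsmall
  refine ⟨y, hy, ?_⟩
  have h1 : |x + u| = A := abs_of_pos (by linarith)
  have h2 : |y + 1| = y + 1 := abs_of_pos (by have := hy.1; linarith)
  have h3 : |y - 1| = 1 - y := by
    rw [abs_of_neg (by have := hy.2; linarith : y - 1 < 0)]; ring
  rw [h1, h2, h3]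
  linarith [heq]
end

section
/- Fix u ≥ 1, sites a = (−u,−1), b = (u,1), and a fixed x with −u < x < 0. Let (p_n) be any sequence of nonzero reals converging to 0, and let (y_n) be a sequence of reals with y_n > 1 and |x+u|^{p_n} + |y_n+1|^{p_n} = |x−u|^{p_n} + |y_n−1|^{p_n} for every n. Then y_n converges to −u/x (the hyperbola point h(x) = −u/x). -/
/-! Divided by `p`, the bisector equation reads `g_p(y) = ((u - x)^p - (u + x)^p) / p` with
`g_p(y) = ((y + 1)^p - (y - 1)^p) / p`. For `p < 1` the function `g_p` is decreasing on `y > 1`.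
Both sides are difference quotients at `p = 0`, so `g_p(y) → log ((y + 1) / (y - 1))`, a strictly
decreasing function, while the right side tends to `log ((u - x) / (u + x))`, its value at
`y = -u/x`. Monotonicity turns this convergence of values into convergence of the `y_n`. -/

open Filter Set Real Topology

theorem tendsto_rpow_sub_rpow_div {ι : Type*} {l : Filter ι} {a b : ℝ} (ha : 0 < a) (hb : 0 < b)
    {p : ι → ℝ} (hp : Tendsto p l (𝓝[≠] 0)) :
    Tendsto (fun i => (a ^ p i - b ^ p i) / p i) l (𝓝 (log a - log b)) := by
  have hderiv : HasDerivAt (fun q : ℝ => a ^ q - b ^ q) (log a - log b) 0 := by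
    have := (hasStrictDerivAt_const_rpow ha 0).hasDerivAt.sub
      (hasStrictDerivAt_const_rpow hb 0).hasDerivAt
    rwa [rpow_zero, rpow_zero, one_mul, one_mul] at this
  refine ((hasDerivAt_iff_tendsto_slope.mp hderiv).comp hp).congr fun i => ?_
  simp [slope_def_field]

noncomputable def bisectorGap (q z : ℝ) : ℝ := ((z + 1) ^ q - (z - 1) ^ q) / q

theorem strictAntiOn_bisectorGap {q : ℝ} (hq0 : q ≠ 0) (hq1 : q < 1) :
    StrictAntiOn (bisectorGap q) (Ioi 1) := by
  have hderiv : ∀ z ∈ Ioi (1 : ℝ),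
      HasDerivAt (bisectorGap q) ((z + 1) ^ (q - 1) - (z - 1) ^ (q - 1)) z := by
    intro z (hz : 1 < z)
    have hplus : HasDerivAt (fun z : ℝ => (z + 1) ^ q) (q * (z + 1) ^ (q - 1)) z := by
      simpa using ((hasDerivAt_id z).add_const 1).rpow_const (p := q)
        (Or.inl (by simp only [id]; linarith))
    have hminus : HasDerivAt (fun z : ℝ => (z - 1) ^ q) (q * (z - 1) ^ (q - 1)) z := by
      simpa using ((hasDerivAt_id z).sub_const 1).rpow_const (p := q)
        (Or.inl (by simp only [id]; linarith))
    have h := (hplus.sub hminus).div_const q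
    rwa [← mul_sub, mul_div_cancel_left₀ _ hq0] at h
  refine strictAntiOn_of_hasDerivWithinAt_neg (convex_Ioi 1)
    (fun z hz => (hderiv z hz).continuousAt.continuousWithinAt)
    (fun z hz => (hderiv z (interior_subset hz)).hasDerivWithinAt) fun z hz => ?_
  rw [interior_Ioi] at hz
  have hz : (1 : ℝ) < z := hz
  exact sub_neg.2 (rpow_lt_rpow_of_neg (by linarith) (by linarith) (by linarith))

theorem strictAntiOn_log_add_one_sub_log_sub_one :
    StrictAntiOn (fun z => log (z + 1) - log (z - 1)) (Ioi 1) := by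
  intro a (ha : 1 < a) b (hb : 1 < b) hab
  have h : log ((b + 1) * (a - 1)) < log ((a + 1) * (b - 1)) :=
    log_lt_log (by nlinarith) (by nlinarith)
  rw [log_mul (by linarith) (by linarith), log_mul (by linarith) (by linarith)] at h
  simp only
  linarith

theorem tendsto_bisectorGap {ι : Type*} {l : Filter ι} {p : ι → ℝ}
    (hp : Tendsto p l (𝓝[≠] 0)) {z : ℝ} (hz : 1 < z) :
    Tendsto (fun i => bisectorGap (p i) z) l (𝓝 (log (z + 1) - log (z - 1))) :=
  tendsto_rpow_sub_rpow_div (by linarith) (by linarith) hp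

theorem tendsto_of_antitoneOn_of_tendsto {ι : Type*} {l : Filter ι} {a y₀ : ℝ}
    {f : ι → ℝ → ℝ} {F : ℝ → ℝ} {y : ι → ℝ}
    (hf : ∀ᶠ i in l, AntitoneOn (f i) (Ioi a)) (hF : StrictAntiOn F (Ioi a))
    (hfF : ∀ z ∈ Ioi a, Tendsto (fun i => f i z) l (𝓝 (F z)))
    (ha : a < y₀) (hy : ∀ᶠ i in l, a < y i)
    (hlim : Tendsto (fun i => f i (y i)) l (𝓝 (F y₀))) : Tendsto y l (𝓝 y₀) := by
  have reflect : ∀ c ∈ Ioi a, ∀ᶠ i in l,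
      (f i (y i) < f i c → c < y i) ∧ (f i c < f i (y i) → y i < c) := by
    intro c hc
    filter_upwards [hf, hy] with i hfi hyi
    exact ⟨hfi.reflect_lt hyi hc, hfi.reflect_lt hc hyi⟩
  refine tendsto_order.2 ⟨fun b hb => ?_, fun b hb => ?_⟩
  · set c := max b ((a + y₀) / 2)
    have hc : a < c := lt_max_of_lt_right (by linarith)
    have hcy : c < y₀ := max_lt hb (by linarith)
    filter_upwards [hlim.eventually_lt (hfF c hc) (hF hc ha hcy), reflect c hc] with i h₁ h₂
    exact (le_max_left _ _).trans_lt (h₂.1 h₁)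
  · have hb' : b ∈ Ioi a := ha.trans hb
    filter_upwards [(hfF b hb').eventually_lt hlim (hF ha hb' hb), reflect b hb'] with i h₁ h₂
    exact h₂.2 h₁

theorem stmt6_general (u x : ℝ) (hx1 : -u < x) (hx2 : x < 0)
    (p : ℕ → ℝ) (hp0 : ∀ n, p n ≠ 0) (hp : Tendsto p atTop (nhds 0))
    (y : ℕ → ℝ) (hy : ∀ n, 1 < y n)
    (hbis : ∀ n, |x + u| ^ (p n) + |y n + 1| ^ (p n)
                 = |x - u| ^ (p n) + |y n - 1| ^ (p n)) :
    Tendsto y atTop (nhds (-u / x)) := by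
  have hp' : Tendsto p atTop (𝓝[≠] 0) :=
    tendsto_nhdsWithin_of_tendsto_nhds_of_eventually_within _ hp (Eventually.of_forall hp0)
  have hgap : ∀ n, bisectorGap (p n) (y n) = ((u - x) ^ p n - (u + x) ^ p n) / p n := by
    intro n
    have h := hbis n
    rw [abs_of_pos (show 0 < x + u by linarith), abs_of_neg (show x - u < 0 by linarith),
      abs_of_pos (show 0 < y n + 1 by linarith [hy n]),
      abs_of_pos (show 0 < y n - 1 by linarith [hy n]), neg_sub, add_comm x u] at h
    rw [bisectorGap]
    congr 1
    linarith
  have hx0 : x ≠ 0 := hx2.ne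
  have hlog : log (-u / x + 1) - log (-u / x - 1) = log (u - x) - log (u + x) := by
    rw [show -u / x + 1 = (u - x) / -x by field_simp; ring,
      show -u / x - 1 = (u + x) / -x by field_simp; ring,
      log_div (by linarith) (by linarith), log_div (by linarith) (by linarith)]
    ring
  refine tendsto_of_antitoneOn_of_tendsto (f := fun n => bisectorGap (p n))
    ?_ strictAntiOn_log_add_one_sub_log_sub_one (fun z hz => tendsto_bisectorGap hp' hz)
    (by rw [lt_div_iff_of_neg hx2]; linarith) (Eventually.of_forall hy) ?_
  · filter_upwards [hp.eventually_lt_const one_pos] with n hn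
    exact (strictAntiOn_bisectorGap (hp0 n) hn).antitoneOn
  · simp only [hgap, hlog]
    exact tendsto_rpow_sub_rpow_div (by linarith) (by linarith) hp'

/-- cell H₂: bisector points above `y = 1` over a fixed `x ∈ (−u,0)`
converge to the hyperbola point `h(x) = −u/x` as `p → 0`. -/
theorem stmt6 (u x : ℝ) (hu : 1 ≤ u) (hx1 : -u < x) (hx2 : x < 0)
    (p : ℕ → ℝ) (hp0 : ∀ n, p n ≠ 0) (hp : Tendsto p atTop (nhds 0))
    (y : ℕ → ℝ) (hy : ∀ n, 1 < y n)
    (hbis : ∀ n, |x + u| ^ (p n) + |y n + 1| ^ (p n)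
                 = |x - u| ^ (p n) + |y n - 1| ^ (p n)) :
    Tendsto y atTop (nhds (-u / x)) :=
  stmt6_general u x hx1 hx2 p hp0 hp y hy hbis
end

section
/- Fix u ≥ 1, sites a = (−u,−1), b = (u,1), and a fixed x with x > u. Let (p_n) be any sequence of nonzero reals converging to 0, and let (y_n) be a sequence of reals with −1 < y_n < 1 and |x+u|^{p_n} + |y_n+1|^{p_n} = |x−u|^{p_n} + |y_n−1|^{p_n} for every n. Then y_n converges to −u/x (the hyperbola point h(x) = −u/x). -/
/-!
Divide the bisector equation by `p`: with `y = yₙ`, `p = pₙ` it reads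
`((1 + y) ^ p - (1 - y) ^ p) / p = ((x - u) ^ p - (x + u) ^ p) / p`.
For `p ≠ 0` the left side is strictly increasing in `y ∈ (-1, 1)`.
Since `(t ^ p - 1) / p → log t` as `p → 0`, the left side converges to
`log (1 + y) - log (1 - y)`, again strictly increasing, and the right side to
`log (x - u) - log (x + u)`, which is the value of that limit at `y = -u / x`.
Comparing `yₙ` with fixed points on either side of `-u / x` through these strictly increasing
functions forces `yₙ → -u / x`.
-/

open Filter Set Topology Real

theorem tendsto_of_strictMonoOn_of_tendsto_apply {ι α β : Type*}
    [LinearOrder α] [TopologicalSpace α] [OrderTopology α]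
    [LinearOrder β] [TopologicalSpace β] [OrderTopology β]
    {l : Filter ι} {I : Set α} [I.OrdConnected] {f : ι → α → β} {g : α → β}
    {y : ι → α} {c : α}
    (hf : ∀ i, StrictMonoOn (f i) I) (hg : StrictMonoOn g I)
    (hfg : ∀ z ∈ I, Tendsto (fun i => f i z) l (𝓝 (g z)))
    (hy : ∀ i, y i ∈ I) (hc : c ∈ I) (hfy : Tendsto (fun i => f i (y i)) l (𝓝 (g c))) :
    Tendsto y l (𝓝 c) := by
  refine tendsto_order.2 ⟨fun z hz => ?_, fun z hz => ?_⟩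
  · by_cases hzI : z ∈ I
    · filter_upwards [(hfg z hzI).eventually_lt hfy (hg hzI hc hz)] with i hi
      exact ((hf i).lt_iff_lt hzI (hy i)).1 hi
    · exact Eventually.of_forall fun i =>
        lt_of_not_ge fun hyz => hzI (I.Icc_subset (hy i) hc ⟨hyz, hz.le⟩)
  · by_cases hzI : z ∈ I
    · filter_upwards [hfy.eventually_lt (hfg z hzI) (hg hc hzI hz)] with i hi
      exact ((hf i).lt_iff_lt (hy i) hzI).1 hi
    · exact Eventually.of_forall fun i =>
        lt_of_not_ge fun hzy => hzI (I.Icc_subset hc (hy i) ⟨hz.le, hzy⟩)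

namespace Real

theorem tendsto_rpow_sub_one_div_nhdsNE {t : ℝ} (ht : 0 < t) :
    Tendsto (fun q => (t ^ q - 1) / q) (𝓝[≠] 0) (𝓝 (log t)) := by
  have hd := (hasStrictDerivAt_const_rpow ht 0).hasDerivAt
  rw [rpow_zero, one_mul, hasDerivAt_iff_tendsto_slope] at hd
  refine hd.congr fun q => ?_
  rw [slope_def_field, rpow_zero, sub_zero]

theorem tendsto_rpow_div_sub_rpow_div_nhdsNE {a b : ℝ} (ha : 0 < a) (hb : 0 < b) :
    Tendsto (fun q => b ^ q / q - a ^ q / q) (𝓝[≠] 0) (𝓝 (log b - log a)) :=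
  ((tendsto_rpow_sub_one_div_nhdsNE hb).sub (tendsto_rpow_sub_one_div_nhdsNE ha)).congr
    fun q => by ring

theorem strictMonoOn_rpow_div {p : ℝ} (hp : p ≠ 0) :
    StrictMonoOn (fun t : ℝ => t ^ p / p) (Ioi 0) := by
  intro s hs t ht hst
  rcases hp.lt_or_gt with hp | hp
  · exact div_lt_div_of_neg_of_lt hp (strictAntiOn_rpow_Ioi_of_exponent_neg hp hs ht hst)
  · exact div_lt_div_of_pos_right (rpow_lt_rpow (le_of_lt hs) hst hp) hp

end Real

theorem StrictMonoOn.sub_comp_one_sub {φ : ℝ → ℝ} (hφ : StrictMonoOn φ (Ioi 0)) :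
    StrictMonoOn (fun w => φ (1 + w) - φ (1 - w)) (Ioo (-1) 1) := by
  intro v ⟨hv₁, hv₂⟩ w ⟨hw₁, hw₂⟩ hvw
  have h₁ : φ (1 + v) < φ (1 + w) :=
    hφ (show 0 < 1 + v by linarith) (show 0 < 1 + w by linarith) (by linarith)
  have h₂ : φ (1 - w) < φ (1 - v) :=
    hφ (show 0 < 1 - w by linarith) (show 0 < 1 - v by linarith) (by linarith)
  linarith

/-- cell H₄: bisector points with `−1 < y < 1` over a fixed `x > u`
converge to the hyperbola point `h(x) = −u/x` as `p → 0`. -/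
theorem stmt7 (u x : ℝ) (hu : 1 ≤ u) (hx : u < x)
    (p : ℕ → ℝ) (hp0 : ∀ n, p n ≠ 0) (hp : Tendsto p atTop (nhds 0))
    (y : ℕ → ℝ) (hy1 : ∀ n, -1 < y n) (hy2 : ∀ n, y n < 1)
    (hbis : ∀ n, |x + u| ^ (p n) + |y n + 1| ^ (p n)
                 = |x - u| ^ (p n) + |y n - 1| ^ (p n)) :
    Tendsto y atTop (nhds (-u / x)) := by
  have hx0 : 0 < x := by linarith
  have hc : -u / x ∈ Ioo (-1) 1 :=
    ⟨by rw [lt_div_iff₀ hx0]; linarith, by rw [div_lt_iff₀ hx0]; linarith⟩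
  have hp' : Tendsto p atTop (𝓝[≠] 0) :=
    tendsto_nhdsWithin_of_tendsto_nhds_of_eventually_within _ hp (Eventually.of_forall hp0)
  have hbis' : ∀ n, (1 + y n) ^ p n / p n - (1 - y n) ^ p n / p n
      = (x - u) ^ p n / p n - (x + u) ^ p n / p n := fun n => by
    have h := hbis n
    rw [abs_of_pos (by linarith : 0 < x + u), abs_of_pos (by linarith : 0 < x - u),
      abs_of_pos (by linarith [hy1 n] : 0 < y n + 1),
      abs_of_neg (by linarith [hy2 n] : y n - 1 < 0), neg_sub, add_comm (y n)] at h
    rw [← sub_div, ← sub_div]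
    congr 1
    linarith
  have hlog : log (1 + -u / x) - log (1 - -u / x) = log (x - u) - log (x + u) := by
    rw [show 1 + -u / x = (x - u) / x by field_simp; ring,
      show 1 - -u / x = (x + u) / x by field_simp; ring,
      log_div (by linarith) hx0.ne', log_div (by linarith) hx0.ne']
    ring
  refine tendsto_of_strictMonoOn_of_tendsto_apply
    (fun n => (strictMonoOn_rpow_div (hp0 n)).sub_comp_one_sub)
    strictMonoOn_log.sub_comp_one_sub
    (fun w hw => (tendsto_rpow_div_sub_rpow_div_nhdsNE
      (by linarith [hw.2]) (by linarith [hw.1])).comp hp')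
    (fun n => ⟨hy1 n, hy2 n⟩) hc ?_
  rw [hlog]
  exact ((tendsto_rpow_div_sub_rpow_div_nhdsNE (by linarith) (by linarith)).comp hp').congr
    fun n => (hbis' n).symm
end

section
/- Let u > 0, x ≠ 0, and p be real numbers, and define w_p(y) = |y−1|^p − |y+1|^p and v_p(x) = |x+u|^p − |x−u|^p. Suppose (x,y) satisfies the L_p bisector equation |x+u|^p + |y+1|^p = |x−u|^p + |y−1|^p. Then w_p(−u/x) − w_p(y) = (|x|^{−p} − 1)·v_p(x) and w_p(−x/u) − w_p(y) = (u^{−p} − 1)·v_p(x). -/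
/-- for a point `(x,y)` on the `L_p` bisector of `(−u,−1)` and `(u,1)`,
with `w_p(y) = |y−1|^p − |y+1|^p` and `v_p(x) = |x+u|^p − |x−u|^p`, one has
`w_p(−u/x) − w_p(y) = (|x|^{−p} − 1)·v_p(x)` and
`w_p(−x/u) − w_p(y) = (u^{−p} − 1)·v_p(x)`. -/
theorem stmt11 (u x p : ℝ) (hu : 0 < u) (hx : x ≠ 0) (y : ℝ)
    (hbis : |x + u| ^ p + |y + 1| ^ p = |x - u| ^ p + |y - 1| ^ p) :
    ((|(-u / x) - 1| ^ p - |(-u / x) + 1| ^ p) - (|y - 1| ^ p - |y + 1| ^ p)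
        = (|x| ^ (-p) - 1) * (|x + u| ^ p - |x - u| ^ p)) ∧
    ((|(-x / u) - 1| ^ p - |(-x / u) + 1| ^ p) - (|y - 1| ^ p - |y + 1| ^ p)
        = (u ^ (-p) - 1) * (|x + u| ^ p - |x - u| ^ p)) := by
  have hv : |y - 1| ^ p - |y + 1| ^ p = |x + u| ^ p - |x - u| ^ p := by linarith
  have hxp : (0:ℝ) < |x| := abs_pos.mpr hx
  have hxpp : (0:ℝ) < |x| ^ p := Real.rpow_pos_of_pos hxp p
  have hupp : (0:ℝ) < u ^ p := Real.rpow_pos_of_pos hu p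
  have e1 : |(-u / x) - 1| = |x + u| / |x| := by
    have h : (-u / x) - 1 = -((x + u) / x) := by field_simp; ring
    rw [h, abs_neg, abs_div]
  have e2 : |(-u / x) + 1| = |x - u| / |x| := by
    have h : (-u / x) + 1 = (x - u) / x := by field_simp; ring
    rw [h, abs_div]
  have e3 : |(-x / u) - 1| = |x + u| / u := by
    have h : (-x / u) - 1 = -((x + u) / u) := by field_simp; ring
    rw [h, abs_neg, abs_div, abs_of_pos hu]
  have e4 : |(-x / u) + 1| = |x - u| / u := by
    have h : (-x / u) + 1 = -((x - u) / u) := by field_simp; ring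
    rw [h, abs_neg, abs_div, abs_of_pos hu]
  rw [e1, e2, e3, e4, hv,
    Real.div_rpow (abs_nonneg _) (abs_nonneg _),
    Real.div_rpow (abs_nonneg _) (abs_nonneg _),
    Real.div_rpow (abs_nonneg _) hu.le,
    Real.div_rpow (abs_nonneg _) hu.le,
    Real.rpow_neg (abs_nonneg x), Real.rpow_neg hu.le]
  constructor <;> field_simp <;> ring
end

section
/- Fix u ≥ 1, a real p with 0 < |p| < 1, and x with −u < x < 0, and let h(x) = −u/x (which is > 1). Suppose y > 1 satisfies |x+u|^p + |y+1|^p = |x−u|^p + |y−1|^p and y ≠ h(x). Then there exists y* strictly between y and h(x) such that p·((y*−1)^{p−1} − (y*+1)^{p−1})·(y − h(x)) = (1 − |x|^{−p})·(|x+u|^p − |x−u|^p). -/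
/-! For `y > 1` the bisector equation says `rpowGap p y = |x+u|^p - |x-u|^p`, while
`h(x) ± 1 = (u ± |x|)/|x|` gives `rpowGap p (h x) = |x|^{-p} (|x+u|^p - |x-u|^p)`.
The mean value theorem for `rpowGap p` between `y` and `h(x)` then yields `y*`. -/

open Set

theorem exists_mul_sub_eq_sub_of_hasDerivAt {f f' : ℝ → ℝ} {a b : ℝ} (hab : a ≠ b)
    (hf : ∀ t ∈ uIcc a b, HasDerivAt f (f' t) t) :
    ∃ c, min a b < c ∧ c < max a b ∧ f' c * (a - b) = f a - f b := by
  wlog hlt : a < b generalizing a b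
  · obtain ⟨c, hc₁, hc₂, hc⟩ :=
      this hab.symm (fun t ht => hf t (uIcc_comm a b ▸ ht)) (hab.lt_or_gt.resolve_left hlt)
    exact ⟨c, min_comm a b ▸ hc₁, max_comm a b ▸ hc₂, by linear_combination -hc⟩
  have hcont : ContinuousOn f (Icc a b) := fun t ht =>
    (hf t (Icc_subset_uIcc ht)).continuousAt.continuousWithinAt
  obtain ⟨c, hc, hslope⟩ := exists_hasDerivAt_eq_slope f f' hlt hcont
    (fun t ht => hf t (Icc_subset_uIcc (Ioo_subset_Icc_self ht)))
  refine ⟨c, by simpa [min_eq_left hlt.le] using hc.1, by simpa [max_eq_right hlt.le] using hc.2, ?_⟩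
  rw [hslope, ← neg_sub b a, mul_neg, div_mul_cancel₀ _ (sub_ne_zero.mpr hab.symm), neg_sub]

noncomputable def rpowGap (p t : ℝ) : ℝ := (t - 1) ^ p - (t + 1) ^ p

theorem hasDerivAt_rpowGap (p : ℝ) {t : ℝ} (ht : 1 < t) :
    HasDerivAt (rpowGap p) (p * ((t - 1) ^ (p - 1) - (t + 1) ^ (p - 1))) t := by
  have hsub := ((hasDerivAt_id' t).sub_const 1).rpow_const (p := p) (Or.inl (by linarith))
  have hadd := ((hasDerivAt_id' t).add_const 1).rpow_const (p := p) (Or.inl (by linarith))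
  exact (hsub.sub hadd).congr_deriv (by ring)

theorem rpowGap_div {u v : ℝ} (p : ℝ) (hv : 0 < v) (hvu : v ≤ u) :
    rpowGap p (u / v) = v ^ (-p) * ((u - v) ^ p - (u + v) ^ p) := by
  have hsub : u / v - 1 = (u - v) / v := by field_simp
  have hadd : u / v + 1 = (u + v) / v := by field_simp
  rw [rpowGap, hsub, hadd, Real.div_rpow (by linarith) hv.le, Real.div_rpow (by linarith) hv.le,
    Real.rpow_neg hv.le]
  ring

theorem rpowGap_eq_of_bisector {p s s' y : ℝ} (hy : 1 < y)
    (hbis : s + |y + 1| ^ p = s' + |y - 1| ^ p) : rpowGap p y = s - s' := by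
  rw [abs_of_pos (by linarith), abs_of_pos (by linarith)] at hbis
  rw [rpowGap]
  linarith

theorem stmt12_general (u p x : ℝ)
    (hx1 : -u < x) (hx2 : x < 0) (y : ℝ) (hy : 1 < y)
    (hbis : |x + u| ^ p + |y + 1| ^ p = |x - u| ^ p + |y - 1| ^ p)
    (hne : y ≠ -u / x) :
    ∃ ystar : ℝ, min y (-u / x) < ystar ∧ ystar < max y (-u / x) ∧
      p * ((ystar - 1) ^ (p - 1) - (ystar + 1) ^ (p - 1)) * (y - (-u / x))
        = (1 - |x| ^ (-p)) * (|x + u| ^ p - |x - u| ^ p) := by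
  have habs : |x| = -x := abs_of_neg hx2
  have hdiv : -u / x = u / |x| := by rw [habs, div_neg, neg_div]
  have hone : 1 < -u / x := by rw [hdiv, one_lt_div (abs_pos.mpr hx2.ne)]; linarith
  obtain ⟨c, hc₁, hc₂, hc⟩ := exists_mul_sub_eq_sub_of_hasDerivAt hne fun t ht =>
    hasDerivAt_rpowGap p (lt_of_lt_of_le (lt_min hy hone) ht.1)
  refine ⟨c, hc₁, hc₂, ?_⟩
  rw [hc, rpowGap_eq_of_bisector hy hbis, hdiv, rpowGap_div p (by linarith) (by linarith),
    abs_of_pos (by linarith : 0 < x + u), abs_of_neg (by linarith : x - u < 0), habs]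
  ring_nf

/-- mean-value form of the error estimate in cell H₂: for a bisector point
`(x,y)` with `−u < x < 0`, `y > 1` and `y ≠ h(x) = −u/x`, there is `y*` strictly between
`y` and `h(x)` with
`p·((y*−1)^{p−1} − (y*+1)^{p−1})·(y − h(x)) = (1 − |x|^{−p})·(|x+u|^p − |x−u|^p)`. -/
theorem stmt12 (u p x : ℝ) (hu : 1 ≤ u) (hp0 : 0 < |p|) (hp1 : |p| < 1)
    (hx1 : -u < x) (hx2 : x < 0) (y : ℝ) (hy : 1 < y)
    (hbis : |x + u| ^ p + |y + 1| ^ p = |x - u| ^ p + |y - 1| ^ p)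
    (hne : y ≠ -u / x) :
    ∃ ystar : ℝ, min y (-u / x) < ystar ∧ ystar < max y (-u / x) ∧
      p * ((ystar - 1) ^ (p - 1) - (ystar + 1) ^ (p - 1)) * (y - (-u / x))
        = (1 - |x| ^ (-p)) * (|x + u| ^ p - |x - u| ^ p) :=
  stmt12_general u p x hx1 hx2 y hy hbis hne
end

section
/- Fix u ≥ 1 and x with −u < x < 0. There exists ε > 0 such that for every real p with 0 < |p| < ε and every y > 1 satisfying (u+x)^p − (u−x)^p = (y−1)^p − (y+1)^p, one has y < 2·(−u/x) + 3; in other words, all such bisector points on the vertical line at x lie in the open interval (1, 2·h(x)+3) where h(x) = −u/x. -/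
/-!
Write `h = -u/x` and `Y = 2h + 3`. Divided by `p`, the right-hand side `(t - 1)^p - (t + 1)^p`
is strictly increasing in `t > 1` as long as `p < 1`, so it suffices that the left-hand side,
divided by `p`, stays below its value at `t = Y`. As `p → 0` both quotients tend to logarithms,
`log ((u + x)/(u - x)) = log ((h - 1)/(h + 1))` and `log ((h + 1)/(h + 2))`, and the first is
strictly smaller.
-/

open Real Set Filter Topology

theorem tendsto_rpow_sub_rpow_div_nhdsNE_zero {a b : ℝ} (ha : 0 < a) (hb : 0 < b) :
    Tendsto (fun p : ℝ => (a ^ p - b ^ p) / p) (𝓝[≠] 0) (𝓝 (log a - log b)) := by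
  have hderiv : HasDerivAt (fun p : ℝ => a ^ p - b ^ p) (log a - log b) 0 := by
    simpa using (hasStrictDerivAt_const_rpow ha 0).hasDerivAt.fun_sub
      (hasStrictDerivAt_const_rpow hb 0).hasDerivAt
  refine hderiv.tendsto_slope.congr fun p => ?_
  simp [slope_def_field]

theorem strictMonoOn_rpow_sub_one_sub_rpow_add_one_div {p : ℝ} (hp0 : p ≠ 0) (hp1 : p < 1) :
    StrictMonoOn (fun t : ℝ => ((t - 1) ^ p - (t + 1) ^ p) / p) (Ioi 1) := by
  have hderiv : ∀ t ∈ Ioi (1 : ℝ), HasDerivAt (fun t : ℝ => ((t - 1) ^ p - (t + 1) ^ p) / p)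
      ((t - 1) ^ (p - 1) - (t + 1) ^ (p - 1)) t := by
    intro t (ht : 1 < t)
    have hsub := ((hasDerivAt_id' t).sub_const 1).rpow_const (p := p) (Or.inl (by linarith))
    have hadd := ((hasDerivAt_id' t).add_const 1).rpow_const (p := p) (Or.inl (by linarith))
    exact ((hsub.fun_sub hadd).div_const p).congr_deriv (by field_simp)
  refine strictMonoOn_of_hasDerivWithinAt_pos (convex_Ioi 1)
    (f' := fun t => (t - 1) ^ (p - 1) - (t + 1) ^ (p - 1))
    (fun t ht => (hderiv t ht).continuousAt.continuousWithinAt) ?_ ?_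
  · rw [interior_Ioi]
    exact fun t ht => (hderiv t ht).hasDerivWithinAt
  · rw [interior_Ioi]
    intro t (ht : 1 < t)
    exact sub_pos.2 (rpow_lt_rpow_of_neg (by linarith) (by linarith) (by linarith))

theorem log_sub_log_lt_log_sub_log_hyperbola {u x : ℝ} (hx1 : -u < x) (hx2 : x < 0) :
    log (u + x) - log (u - x) < log (2 * (-u / x) + 3 - 1) - log (2 * (-u / x) + 3 + 1) := by
  have hh : 0 < -u / x := div_pos_of_neg_of_neg (by linarith) hx2
  have hxh : x * (-u / x) = -u := mul_div_cancel₀ _ hx2.ne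
  rw [sub_lt_sub_iff, ← log_mul (by linarith) (by linarith),
    ← log_mul (by linarith) (by linarith)]
  exact log_lt_log (by nlinarith) (by nlinarith)

theorem stmt13_general (u x : ℝ) (hx1 : -u < x) (hx2 : x < 0) :
    ∃ ε > (0:ℝ), ∀ p : ℝ, 0 < |p| → |p| < ε → ∀ y : ℝ, 1 < y →
      (u + x) ^ p - (u - x) ^ p = (y - 1) ^ p - (y + 1) ^ p →
      y < 2 * (-u / x) + 3 := by
  set Y := 2 * (-u / x) + 3
  have hY : 1 < Y := by
    have : 0 < -u / x := div_pos_of_neg_of_neg (by linarith) hx2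
    linarith
  have hlim : ∀ᶠ p in 𝓝[≠] 0,
      ((u + x) ^ p - (u - x) ^ p) / p < ((Y - 1) ^ p - (Y + 1) ^ p) / p :=
    (tendsto_rpow_sub_rpow_div_nhdsNE_zero (by linarith) (by linarith)).eventually_lt
      (tendsto_rpow_sub_rpow_div_nhdsNE_zero (by linarith) (by linarith))
      (log_sub_log_lt_log_sub_log_hyperbola hx1 hx2)
  obtain ⟨ε, hε, hsmall⟩ := Metric.eventually_nhds_iff.1 <|
    eventually_nhdsWithin_iff.1 (hlim.and (eventually_nhdsWithin_of_eventually_nhds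
      (Metric.ball_mem_nhds 0 one_pos)))
  refine ⟨ε, hε, fun p hp0 hpε y hy hbis => ?_⟩
  have hp : p ≠ 0 := abs_pos.1 hp0
  obtain ⟨hlt, hp1⟩ := hsmall (by simpa using hpε) hp
  rw [hbis] at hlt
  have hmono := strictMonoOn_rpow_sub_one_sub_rpow_add_one_div hp (abs_lt.1 (by simpa using hp1)).2
  exact (hmono.lt_iff_lt hy hY).1 hlt

/-- in cell H₂ (`−u < x < 0`, `y > 1`), for all `p` close enough to `0`
every bisector point on the vertical line at `x` satisfies `y < 2·h(x) + 3`, where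
`h(x) = −u/x`. -/
theorem stmt13 (u x : ℝ) (hu : 1 ≤ u) (hx1 : -u < x) (hx2 : x < 0) :
    ∃ ε > (0:ℝ), ∀ p : ℝ, 0 < |p| → |p| < ε → ∀ y : ℝ, 1 < y →
      (u + x) ^ p - (u - x) ^ p = (y - 1) ^ p - (y + 1) ^ p →
      y < 2 * (-u / x) + 3 :=
  stmt13_general u x hx1 hx2
end

section
/- Fix u ≥ 1 and sites a = (−u,−1), b = (u,1). Let (p_n) be any sequence of reals with 0 < p_n < 1 and p_n → 0, and let (x_n) be any sequence of reals satisfying |x_n+u|^{p_n} − |x_n−u|^{p_n} = 2^{p_n} for every n. Then x_n converges to u. In other words, as p tends to 0 from above, the intersection of the L_p bisector of a and b with the horizontal line y = −1 converges to the single point (u,−1). -/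
/-!
The equation `|y + u|^q - |y - u|^q = 2^q` forces `|y - u| < |y + u|`, so `y > 0`.
If `y ≤ u`, then `|y + u| ≤ 2u` gives `|y - u|^q ≤ 2^q (u^q - 1)`, which tends to `0` with `q`.
If `y > u`, concavity of `t ↦ t^q` bounds the increment `(B + 2u)^q - B^q` with `B = y - u`
by `2uq B^(q-1)`, while it equals `2^q ≥ 1`; hence `B^(1-q) ≤ 2uq`. In both cases a power of
`|y - u|` with exponent in `(0, 1]` is small, and for numbers below `1` this makes `|y - u|`
itself small.
-/

open Filter Topology

lemma lt_of_rpow_lt_of_le_one {t ε r : ℝ} (ht : 0 ≤ t) (hε : ε ≤ 1) (hr0 : 0 < r) (hr1 : r ≤ 1)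
    (h : t ^ r < ε) : t < ε := by
  have hε0 : 0 < ε := (Real.rpow_nonneg ht r).trans_lt h
  have hε_le : ε ≤ ε ^ r := Real.self_le_rpow_of_le_one hε0.le hε hr1
  exact (Real.rpow_lt_rpow_iff ht hε0.le hr0).mp (h.trans_le hε_le)

lemma rpow_add_sub_rpow_le {b c q : ℝ} (hb : 0 < b) (hc : 0 ≤ c) (hq0 : 0 ≤ q) (hq1 : q ≤ 1) :
    (b + c) ^ q - b ^ q ≤ q * b ^ (q - 1) * c := by
  have hbern : (1 + c / b) ^ q ≤ 1 + q * (c / b) :=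
    rpow_one_add_le_one_add_mul_self (by linarith [div_nonneg hc hb.le]) hq0 hq1
  have hsplit : (b + c) ^ q = b ^ q * (1 + c / b) ^ q := by
    rw [← Real.mul_rpow hb.le (by positivity), mul_add, mul_one, mul_div_cancel₀ _ hb.ne']
  have hpow : b ^ (q - 1) = b ^ q / b := by rw [Real.rpow_sub_one hb.ne']
  rw [hsplit, hpow]
  calc b ^ q * (1 + c / b) ^ q - b ^ q ≤ b ^ q * (1 + q * (c / b)) - b ^ q := by
        gcongr
    _ = q * (b ^ q / b) * c := by ring

section Bisector

variable {u q y : ℝ}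

lemma pos_of_abs_sub_lt_abs_add (hu : 0 < u) (h : |y - u| < |y + u|) : 0 < y := by
  have := sq_lt_sq.mpr h
  nlinarith

lemma pos_of_bisector (hu : 0 < u) (hq : 0 < q)
    (h : |y + u| ^ q - |y - u| ^ q = 2 ^ q) : 0 < y := by
  have hlt : |y - u| ^ q < |y + u| ^ q := by linarith [Real.rpow_pos_of_pos two_pos q]
  exact pos_of_abs_sub_lt_abs_add hu
    ((Real.rpow_lt_rpow_iff (abs_nonneg _) (abs_nonneg _) hq).mp hlt)

lemma abs_sub_rpow_le_of_bisector_of_le (hu : 0 < u) (hq : 0 < q) (hyu : y ≤ u)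
    (h : |y + u| ^ q - |y - u| ^ q = 2 ^ q) : |y - u| ^ q ≤ 2 ^ q * (u ^ q - 1) := by
  have hy := pos_of_bisector hu hq h
  have hle : |y + u| ^ q ≤ (2 * u) ^ q :=
    Real.rpow_le_rpow (abs_nonneg _) (by rw [abs_of_pos (by linarith)]; linarith) hq.le
  rw [Real.mul_rpow zero_le_two hu.le] at hle
  linarith

lemma abs_sub_rpow_one_sub_le_of_bisector_of_lt (hu : 0 < u) (hq0 : 0 < q) (hq1 : q ≤ 1)
    (hyu : u < y) (h : |y + u| ^ q - |y - u| ^ q = 2 ^ q) :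
    |y - u| ^ (1 - q) ≤ 2 * u * q := by
  set B := y - u
  have hB0 : 0 < B := sub_pos.mpr hyu
  have hsum : |y + u| = B + 2 * u := by rw [abs_of_pos (by linarith)]; ring
  rw [hsum, abs_of_pos hB0] at h
  rw [abs_of_pos hB0]
  have hincr : 1 ≤ q * B ^ (q - 1) * (2 * u) := calc
    1 ≤ (2 : ℝ) ^ q := Real.one_le_rpow one_le_two hq0.le
    _ = (B + 2 * u) ^ q - B ^ q := h.symm
    _ ≤ q * B ^ (q - 1) * (2 * u) := rpow_add_sub_rpow_le hB0 (by positivity) hq0.le hq1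
  have hinv : B ^ (1 - q) * B ^ (q - 1) = 1 := by
    rw [← Real.rpow_add hB0, sub_add_sub_cancel', sub_self, Real.rpow_zero]
  calc B ^ (1 - q) ≤ B ^ (1 - q) * (q * B ^ (q - 1) * (2 * u)) :=
        le_mul_of_one_le_right (Real.rpow_nonneg hB0.le _) hincr
    _ = 2 * u * q * (B ^ (1 - q) * B ^ (q - 1)) := by ring
    _ = 2 * u * q := by rw [hinv, mul_one]

lemma abs_sub_lt_of_bisector {ε : ℝ} (hu : 0 < u) (hq0 : 0 < q) (hq1 : q < 1) (hε : ε ≤ 1)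
    (hleft : 2 ^ q * (u ^ q - 1) < ε) (hright : 2 * u * q < ε)
    (h : |y + u| ^ q - |y - u| ^ q = 2 ^ q) : |y - u| < ε := by
  rcases le_or_gt y u with hyu | hyu
  · exact lt_of_rpow_lt_of_le_one (abs_nonneg _) hε hq0 hq1.le
      ((abs_sub_rpow_le_of_bisector_of_le hu hq0 hyu h).trans_lt hleft)
  · exact lt_of_rpow_lt_of_le_one (abs_nonneg _) hε (by linarith) (by linarith)
      ((abs_sub_rpow_one_sub_le_of_bisector_of_lt hu hq0 hq1.le hyu h).trans_lt hright)

end Bisector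

/-- as `p → 0` from above, the points `(x,−1)` on the `L_p` bisector of
`(−u,−1)` and `(u,1)` (i.e. those with `|x+u|^p − |x−u|^p = 2^p`) converge to `(u,−1)`. -/
theorem stmt19 (u : ℝ) (hu : 1 ≤ u)
    (p : ℕ → ℝ) (hp1 : ∀ n, 0 < p n) (hp2 : ∀ n, p n < 1)
    (hp : Tendsto p atTop (nhds 0))
    (x : ℕ → ℝ)
    (hx : ∀ n, |x n + u| ^ (p n) - |x n - u| ^ (p n) = (2:ℝ) ^ (p n)) :
    Tendsto x atTop (nhds u) := by
  have hu0 : 0 < u := by linarith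
  have hbound : Tendsto (fun q : ℝ => max (2 ^ q * (u ^ q - 1)) (2 * u * q)) (𝓝 0) (𝓝 0) := by
    have hcont : Continuous fun q : ℝ => max (2 ^ q * (u ^ q - 1)) (2 * u * q) :=
      ((Real.continuous_const_rpow two_ne_zero).mul
        ((Real.continuous_const_rpow hu0.ne').sub continuous_const)).max (by fun_prop)
    simpa using hcont.tendsto 0
  rw [Metric.tendsto_nhds]
  intro ε hε
  filter_upwards [(hbound.comp hp).eventually (gt_mem_nhds (lt_min hε one_pos))] with n hn
  rw [Real.dist_eq]
  exact (abs_sub_lt_of_bisector hu0 (hp1 n) (hp2 n) (min_le_right ε 1)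
    ((le_max_left _ _).trans_lt hn) ((le_max_right _ _).trans_lt hn) (hx n)).trans_le
    (min_le_left ε 1)
end
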